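/- In the forest monoid 𝓕: (1) any two elements a, b have a common right multiple, i.e. a·𝓕 ∩ b·𝓕 is nonempty; (2) any two elements a, b have a least common right multiple, i.e. an element c ∈ a·𝓕 ∩ b·𝓕 such that every c' ∈ a·𝓕 ∩ b·𝓕 lies in c·𝓕; (3) any two elements a, b have a greatest common left factor, i.e. an element d with a ∈ d·𝓕 and b ∈ d·𝓕 such that every d' with a ∈ d'·𝓕 and b ∈ d'·𝓕 satisfies d ∈ d'·𝓕; (4) any two elements a, b have a greatest common right factor, i.e. an element f with a ∈ 𝓕·f and b ∈ 𝓕·f such that every f' with a ∈ 𝓕·f' and b ∈ 𝓕·f' satisfies f ∈ 𝓕·f'; (5) any two elements a, b with 𝓕·a ∩ 𝓕·b nonempty have a least common left multiple, i.e. an element c ∈ 𝓕·a ∩ 𝓕·b such that every c' ∈ 𝓕·a ∩ 𝓕·b lies in 𝓕·c. -/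

import Mathlib

/-!
Left multiplication by `λ_k` acts on lists by `leftInsert`, and right multiplication by `λ_s` acts
on multisets of indices by `rightInsert` (add `s`, raise every index above `s` by one). Evaluating
either action at the empty list or multiset is injective, because every element has a
non-decreasing normal form; so `𝓕` is cancellative, and the actions compute the intersections of
principal ideals of generators: for `s < t`, `λ_s 𝓕 ∩ λ_t 𝓕 = λ_s λ_{t+1} 𝓕`, while `𝓕 λ_s ∩ 𝓕 λ_t`
is empty if `t = s + 1` and is `𝓕 λ_{t-1} λ_s` otherwise. The complements are again generators or
`1`, so in a left-cancellative monoid least common right multiples propagate from generators to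
all elements by induction on word length. A common left divisor of maximal length is a greatest
one, since its lcm with any other common left divisor is again a common left divisor. The
left-handed statements are the right-handed ones in the opposite monoid.
-/

/-- The defining relation of the forest monoid: `λ_j * λ_i = λ_i * λ_{j+1}` for `i < j`. -/
def ForestRel : FreeMonoid ℕ+ → FreeMonoid ℕ+ → Prop := fun a b =>
  ∃ i j : ℕ+, i < j ∧ a = FreeMonoid.of j * FreeMonoid.of i ∧
    b = FreeMonoid.of i * FreeMonoid.of (j + 1)

/-- The congruence generated by the forest relations. -/
def ForestCon : Con (FreeMonoid ℕ+) := conGen ForestRel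

/-- The forest monoid `𝓕`. -/
abbrev ForestMonoid := ForestCon.Quotient

/-- The generator `λ_k` of the forest monoid. -/
def lam (k : ℕ+) : ForestMonoid := ForestCon.mk' (FreeMonoid.of k)

namespace Monoid

variable {M : Type*} [Monoid M]

def HasCommonRightMultiple (a b : M) : Prop := ∃ c, a ∣ c ∧ b ∣ c

def IsRightLCM (a b c : M) : Prop := (a ∣ c ∧ b ∣ c) ∧ ∀ c', a ∣ c' → b ∣ c' → c ∣ c'

def IsLeftGCD (a b d : M) : Prop := (d ∣ a ∧ d ∣ b) ∧ ∀ d', d' ∣ a → d' ∣ b → d' ∣ d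

theorem IsRightLCM.symm {a b c : M} (h : IsRightLCM a b c) : IsRightLCM b a c :=
  ⟨h.1.symm, fun c' hb ha => h.2 c' ha hb⟩

theorem isRightLCM_self (a : M) : IsRightLCM a a a :=
  ⟨⟨dvd_rfl, dvd_rfl⟩, fun _ ha _ => ha⟩

theorem isRightLCM_one_right (a : M) : IsRightLCM a 1 a :=
  ⟨⟨dvd_rfl, one_dvd a⟩, fun _ ha _ => ha⟩

theorem exists_isRightLCM_mul [IsLeftCancelMul M] {x y b u : M} (hx : IsRightLCM x b (x * u))
    (hy : HasCommonRightMultiple y u → ∃ c, IsRightLCM y u c)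
    (hxy : HasCommonRightMultiple (x * y) b) : ∃ c, IsRightLCM (x * y) b c := by
  have cancel : ∀ {c'}, x * y ∣ c' → b ∣ c' → ∃ w, y ∣ w ∧ u ∣ w ∧ c' = x * w := by
    rintro c' ⟨v, rfl⟩ hb
    obtain ⟨w, hw⟩ := hx.2 _ (dvd_mul_of_dvd_left (dvd_mul_right x y) v) hb
    rw [mul_assoc, mul_assoc] at hw
    exact ⟨y * v, dvd_mul_right y v, ⟨w, mul_left_cancel hw⟩, by rw [mul_assoc]⟩
  obtain ⟨c₀, hxy₀, hb₀⟩ := hxy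
  obtain ⟨w₀, hy₀, hu₀, -⟩ := cancel hxy₀ hb₀
  obtain ⟨c, ⟨hyc, huc⟩, hc⟩ := hy ⟨w₀, hy₀, hu₀⟩
  refine ⟨x * c, ⟨mul_dvd_mul_left x hyc, hx.1.2.trans (mul_dvd_mul_left x huc)⟩, ?_⟩
  intro c' hxy' hb'
  obtain ⟨w, hyw, huw, rfl⟩ := cancel hxy' hb'
  exact mul_dvd_mul_left x (hc w hyw huw)

theorem hasCommonRightMultiple_mul {x y b u : M} (hx : b ∣ x * u)
    (hy : HasCommonRightMultiple y u) : HasCommonRightMultiple (x * y) b := by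
  obtain ⟨c, hyc, huc⟩ := hy
  exact ⟨x * c, mul_dvd_mul_left x hyc, hx.trans (mul_dvd_mul_left x huc)⟩

theorem hasCommonRightMultiple_of_closure_eq_top {S : Set M} (hS : Submonoid.closure S = ⊤)
    (hgen : ∀ s ∈ S, ∀ t ∈ S, ∃ u ∈ insert 1 S, s ∣ t * u) (a b : M) :
    HasCommonRightMultiple a b := by
  have gen_left : ∀ b, ∀ s ∈ insert 1 S, HasCommonRightMultiple b s := by
    intro b
    induction b using Submonoid.induction_of_closure_eq_top_left hS with
    | one => exact fun s _ => ⟨s, one_dvd s, dvd_rfl⟩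
    | mul_left t ht b ih =>
      rintro s (rfl | hs)
      · exact ⟨t * b, dvd_rfl, one_dvd _⟩
      · obtain ⟨u, hu, hdvd⟩ := hgen s hs t ht
        exact hasCommonRightMultiple_mul hdvd (ih u hu)
  induction a using Submonoid.induction_of_closure_eq_top_left hS generalizing b with
  | one => exact ⟨b, one_dvd b, dvd_rfl⟩
  | mul_left s hs a ih =>
    obtain ⟨c, hb, hs'⟩ := gen_left b s (Set.mem_insert_of_mem 1 hs)
    obtain ⟨u, rfl⟩ := hs'
    exact hasCommonRightMultiple_mul hb (ih u)

theorem exists_isRightLCM_of_closure_eq_top [IsLeftCancelMul M] {S : Set M}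
    (hS : Submonoid.closure S = ⊤)
    (hgen : ∀ s ∈ S, ∀ t ∈ S, HasCommonRightMultiple s t →
      ∃ u ∈ insert 1 S, IsRightLCM s t (s * u))
    {a b : M} (hab : HasCommonRightMultiple a b) : ∃ c, IsRightLCM a b c := by
  have gen_right : ∀ b, ∀ s ∈ insert 1 S, HasCommonRightMultiple b s → ∃ c, IsRightLCM b s c := by
    intro b
    induction b using Submonoid.induction_of_closure_eq_top_left hS with
    | one => exact fun s _ _ => ⟨s, (isRightLCM_one_right s).symm⟩
    | mul_left t ht b ih =>
      rintro s (rfl | hs) hbs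
      · exact ⟨_, isRightLCM_one_right _⟩
      · obtain ⟨c, htb, hsc⟩ := hbs
        obtain ⟨u, hu, hlcm⟩ := hgen t ht s hs ⟨c, (dvd_mul_right t b).trans htb, hsc⟩
        exact exists_isRightLCM_mul hlcm (ih u hu) ⟨c, htb, hsc⟩
  induction a using Submonoid.induction_of_closure_eq_top_left hS generalizing b with
  | one => exact ⟨b, ⟨one_dvd b, dvd_rfl⟩, fun _ _ h => h⟩
  | mul_left s hs a ih =>
    obtain ⟨c₀, hsa, hbc⟩ := hab
    obtain ⟨c, hlcm⟩ := gen_right b s (Set.mem_insert_of_mem 1 hs)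
      ⟨c₀, hbc, (dvd_mul_right s a).trans hsa⟩
    obtain ⟨u, rfl⟩ := hlcm.1.2
    exact exists_isRightLCM_mul hlcm.symm (ih (b := u)) ⟨c₀, hsa, hbc⟩

theorem exists_isLeftGCD_of_exists_isRightLCM (len : M → ℕ)
    (len_mul : ∀ a b, len (a * b) = len a + len b) (eq_one_of_len : ∀ a, len a = 0 → a = 1)
    (hlcm : ∀ a b : M, HasCommonRightMultiple a b → ∃ c, IsRightLCM a b c) (a b : M) :
    ∃ d, IsLeftGCD a b d := by
  classical
  let P : ℕ → Prop := fun n => ∃ d, d ∣ a ∧ d ∣ b ∧ len d = n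
  have len_le : ∀ {d c}, d ∣ c → len d ≤ len c := by
    rintro d _ ⟨x, rfl⟩
    rw [len_mul]
    exact Nat.le_add_right _ _
  obtain ⟨d, hda, hdb, hd⟩ : P (Nat.findGreatest P (len a)) :=
    Nat.findGreatest_spec (Nat.zero_le _) ⟨1, one_dvd a, one_dvd b, by simpa using len_mul 1 1⟩
  refine ⟨d, ⟨hda, hdb⟩, fun d' hd'a hd'b => ?_⟩
  obtain ⟨c, ⟨hdc, hd'c⟩, hc⟩ := hlcm d d' ⟨a, hda, hd'a⟩
  have hca := hc a hda hd'a
  have hmax : len c ≤ len d := hd ▸ Nat.le_findGreatest (len_le hca) ⟨c, hca, hc b hdb hd'b, rfl⟩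
  obtain ⟨u, rfl⟩ := hdc
  rw [len_mul] at hmax
  rwa [eq_one_of_len u (by omega), mul_one] at hd'c

end Monoid

theorem Multiset.exists_map_eq_of_forall_mem_range {α β : Type*} {f : α → β}
    {M : Multiset β} (h : ∀ b ∈ M, b ∈ Set.range f) : ∃ Z : Multiset α, Z.map f = M := by
  induction M using Multiset.induction_on with
  | empty => exact ⟨0, rfl⟩
  | cons b M ih =>
    obtain ⟨Z, rfl⟩ := ih fun x hx => h x (Multiset.mem_cons_of_mem hx)
    obtain ⟨a, rfl⟩ := h b (Multiset.mem_cons_self b _)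
    exact ⟨a ::ₘ Z, Multiset.map_cons f a Z⟩

namespace ForestMonoid

open Monoid MulOpposite


/-- For non-decreasing `L` this is the normal form of `λ_k * ofList L`: `λ_k` moves right past
each smaller `λ_m`, gaining one in index each time. -/
def leftInsert (k : ℕ+) : List ℕ+ → List ℕ+
  | [] => [k]
  | m :: L => if k ≤ m then k :: m :: L else m :: leftInsert (k + 1) L

theorem leftInsert_cons_of_le {k m : ℕ+} (h : k ≤ m) (L : List ℕ+) :
    leftInsert k (m :: L) = k :: m :: L := if_pos h

theorem leftInsert_cons_of_lt {k m : ℕ+} (h : m < k) (L : List ℕ+) :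
    leftInsert k (m :: L) = m :: leftInsert (k + 1) L := if_neg h.not_ge

theorem leftInsert_ne_nil (k : ℕ+) (L : List ℕ+) : leftInsert k L ≠ [] := by
  cases L with
  | nil => simp [leftInsert]
  | cons m L => unfold leftInsert; split_ifs <;> simp

theorem leftInsert_leftInsert {i j : ℕ+} (h : i < j) (L : List ℕ+) :
    leftInsert j (leftInsert i L) = leftInsert i (leftInsert (j + 1) L) := by
  induction L generalizing i j with
  | nil =>
    rw [leftInsert, leftInsert, leftInsert_cons_of_lt h, leftInsert,
      leftInsert_cons_of_le (h.trans (PNat.lt_add_right j 1)).le]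
  | cons m L ih =>
    rcases le_or_gt i m with him | hmi
    · rw [leftInsert_cons_of_le him, leftInsert_cons_of_lt h]
      rcases le_or_gt (j + 1) m with hjm | hmj
      · rw [leftInsert_cons_of_le hjm, leftInsert_cons_of_le (h.trans (PNat.lt_add_right j 1)).le]
      · rw [leftInsert_cons_of_lt hmj, leftInsert_cons_of_le him]
    · rw [leftInsert_cons_of_lt hmi, leftInsert_cons_of_lt (hmi.trans h),
        leftInsert_cons_of_lt (hmi.trans (h.trans (PNat.lt_add_right j 1))),
        leftInsert_cons_of_lt hmi, ih (add_lt_add_left h 1)]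

theorem leftInsert_injective (k : ℕ+) : Function.Injective (leftInsert k) := by
  intro A B h
  induction A generalizing k B with
  | nil =>
    cases B with
    | nil => rfl
    | cons n B =>
      unfold leftInsert at h
      split_ifs at h <;> simp [(leftInsert_ne_nil _ _).symm] at h
  | cons m A ih =>
    cases B with
    | nil =>
      unfold leftInsert at h
      split_ifs at h <;> simp [leftInsert_ne_nil] at h
    | cons n B =>
      simp only [leftInsert] at h
      split_ifs at h with hm hn hn <;> simp only [List.cons.injEq] at h
      · exact List.cons_eq_cons.2 h.2
      · exact absurd h.1 (lt_of_not_ge hn).ne'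
      · exact absurd h.1 (lt_of_not_ge hm).ne
      · exact List.cons_eq_cons.2 ⟨h.1, ih _ h.2⟩

theorem leftInsert_eq_leftInsert {s t : ℕ+} (hst : s < t) {A B : List ℕ+}
    (h : leftInsert s A = leftInsert t B) : ∃ Z, A = leftInsert (t + 1) Z ∧ B = leftInsert s Z := by
  induction A generalizing s t B with
  | nil =>
    cases B with
    | nil => exact absurd (List.cons_eq_cons.1 h).1 hst.ne
    | cons n B =>
      unfold leftInsert at h
      split_ifs at h <;> simp [(leftInsert_ne_nil _ _).symm] at h
  | cons m A ih =>
    cases B with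
    | nil =>
      unfold leftInsert at h
      split_ifs at h <;> simp [leftInsert_ne_nil] at h
    | cons n B =>
      simp only [leftInsert] at h
      split_ifs at h with hm hn hn <;> simp only [List.cons.injEq] at h
      · exact absurd h.1 hst.ne
      · obtain ⟨rfl, hB⟩ := h
        refine ⟨B, hB, ?_⟩
        cases B with
        | nil => rfl
        | cons b B =>
          have hsb : s ≤ b := by
            by_contra! hbs
            rw [leftInsert_cons_of_lt (hbs.trans (hst.trans (PNat.lt_add_right t 1)))] at hB
            exact hbs.not_ge ((List.cons_eq_cons.1 hB).1 ▸ hm)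
          exact (leftInsert_cons_of_le hsb B).symm
      · exact absurd (h.1 ▸ (lt_of_not_ge hm)) hst.not_gt
      · obtain ⟨rfl, hA⟩ := h
        obtain ⟨Z, rfl, rfl⟩ := ih (add_lt_add_left hst 1) hA
        have hmt : m < t + 1 := (lt_of_not_ge hm).trans (hst.trans (PNat.lt_add_right t 1))
        exact ⟨m :: Z, (leftInsert_cons_of_lt hmt Z).symm,
          (leftInsert_cons_of_lt (lt_of_not_ge hm) Z).symm⟩

theorem mem_leftInsert {k e : ℕ+} {L : List ℕ+} (he : e ∈ leftInsert k L) : e ∈ L ∨ k ≤ e := by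
  induction L generalizing k with
  | nil => simp_all [leftInsert]
  | cons m L ih =>
    unfold leftInsert at he
    split_ifs at he with hkm
    · aesop
    · rcases List.mem_cons.1 he with rfl | he
      · simp
      · rcases ih he with he | he
        · simp [he]
        · exact Or.inr ((PNat.lt_add_right k 1).le.trans he)

theorem pairwise_leftInsert (k : ℕ+) {L : List ℕ+} (hL : L.Pairwise (· ≤ ·)) :
    (leftInsert k L).Pairwise (· ≤ ·) := by
  induction L generalizing k with
  | nil => simp [leftInsert]
  | cons m L ih =>
    rw [List.pairwise_cons] at hL
    rcases le_or_gt k m with hkm | hmk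
    · rw [leftInsert_cons_of_le hkm]
      refine List.pairwise_cons.2 ⟨fun e he => ?_, List.pairwise_cons.2 hL⟩
      rcases List.mem_cons.1 he with rfl | he
      exacts [hkm, hkm.trans (hL.1 e he)]
    · rw [leftInsert_cons_of_lt hmk]
      refine List.pairwise_cons.2 ⟨fun e he => ?_, ih _ hL.2⟩
      rcases mem_leftInsert he with he | hke
      exacts [hL.1 e he, (hmk.trans (PNat.lt_add_right k 1)).le.trans hke]

theorem lam_mul_lam {i j : ℕ+} (h : i < j) : lam j * lam i = lam i * lam (j + 1) := by
  simp only [lam, ← map_mul]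
  exact (Con.eq ForestCon).2 (ConGen.Rel.of _ _ ⟨i, j, h, rfl, rfl⟩)

theorem closure_range_lam : Submonoid.closure (Set.range lam) = ⊤ := by
  rw [show lam = ForestCon.mk' ∘ FreeMonoid.of from rfl, Set.range_comp, ← MonoidHom.map_mclosure,
    FreeMonoid.closure_range_of, ← MonoidHom.mrange_eq_map, MonoidHom.mrange_eq_top]
  exact ForestCon.mk'_surjective

def leftAction : ForestMonoid →* Function.End (List ℕ+) :=
  ForestCon.lift (FreeMonoid.lift leftInsert) <| Con.conGen_le.2 <| by
    rintro _ _ ⟨i, j, h, rfl, rfl⟩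
    funext L
    exact leftInsert_leftInsert h L

theorem leftAction_lam (k : ℕ+) : leftAction (lam k) = leftInsert k :=
  FreeMonoid.lift_eval_of _ _

def normalForm (x : ForestMonoid) : List ℕ+ := leftAction x []

theorem normalForm_lam_mul (k : ℕ+) (x : ForestMonoid) :
    normalForm (lam k * x) = leftInsert k (normalForm x) := by
  rw [normalForm, map_mul, ← leftAction_lam]
  rfl

def ofList (L : List ℕ+) : ForestMonoid := (L.map lam).prod

@[simp] theorem ofList_nil : ofList [] = 1 := rfl

@[simp] theorem ofList_cons (k : ℕ+) (L : List ℕ+) : ofList (k :: L) = lam k * ofList L := by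
  simp [ofList]

theorem ofList_append (L L' : List ℕ+) : ofList (L ++ L') = ofList L * ofList L' := by
  simp [ofList]

theorem ofList_leftInsert (k : ℕ+) (L : List ℕ+) : ofList (leftInsert k L) = lam k * ofList L := by
  induction L generalizing k with
  | nil => simp [leftInsert]
  | cons m L ih =>
    rcases le_or_gt k m with hkm | hmk
    · rw [leftInsert_cons_of_le hkm, ofList_cons]
    · rw [leftInsert_cons_of_lt hmk, ofList_cons, ih, ofList_cons, ← mul_assoc, ← lam_mul_lam hmk,
        mul_assoc]

theorem ofList_normalForm (x : ForestMonoid) : ofList (normalForm x) = x := by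
  induction x using Submonoid.induction_of_closure_eq_top_left closure_range_lam with
  | one => rfl
  | mul_left _ hk x ih =>
    obtain ⟨k, rfl⟩ := hk
    rw [normalForm_lam_mul, ofList_leftInsert, ih]

theorem normalForm_injective : Function.Injective normalForm :=
  Function.LeftInverse.injective ofList_normalForm

theorem pairwise_normalForm (x : ForestMonoid) : (normalForm x).Pairwise (· ≤ ·) := by
  induction x using Submonoid.induction_of_closure_eq_top_left closure_range_lam with
  | one => exact List.Pairwise.nil
  | mul_left _ hk x ih =>
    obtain ⟨k, rfl⟩ := hk
    rw [normalForm_lam_mul]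
    exact pairwise_leftInsert k ih

theorem isLeftRegular_lam (k : ℕ+) : IsLeftRegular (lam k) := fun x y h =>
  normalForm_injective <| leftInsert_injective k <| by
    simp only [← normalForm_lam_mul]
    exact congrArg normalForm h

instance : IsLeftCancelMul ForestMonoid where
  mul_left_cancel a := by
    induction a using Submonoid.induction_of_closure_eq_top_left closure_range_lam with
    | one => exact isRegular_one.left
    | mul_left _ hk a ih =>
      obtain ⟨k, rfl⟩ := hk
      exact (isLeftRegular_lam k).mul ih

theorem lam_mul_eq_lam_mul {s t : ℕ+} (hst : s < t) {x y : ForestMonoid}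
    (h : lam s * x = lam t * y) : ∃ z, x = lam (t + 1) * z ∧ y = lam s * z := by
  obtain ⟨Z, hx, hy⟩ := leftInsert_eq_leftInsert hst
    (by rw [← normalForm_lam_mul, ← normalForm_lam_mul, h] : leftInsert s (normalForm x) = _)
  refine ⟨ofList Z, ?_, ?_⟩
  · rw [← ofList_normalForm x, hx, ofList_leftInsert]
  · rw [← ofList_normalForm y, hy, ofList_leftInsert]

def shiftAbove (s e : ℕ+) : ℕ+ := if e ≤ s then e else e + 1

theorem shiftAbove_of_le {s e : ℕ+} (h : e ≤ s) : shiftAbove s e = e := if_pos h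

theorem shiftAbove_of_lt {s e : ℕ+} (h : s < e) : shiftAbove s e = e + 1 := if_neg h.not_ge

theorem strictMono_shiftAbove (s : ℕ+) : StrictMono (shiftAbove s) := by
  intro a b hab
  unfold shiftAbove
  split_ifs <;> simp only [← PNat.coe_lt_coe, ← PNat.coe_le_coe, PNat.add_coe,
    PNat.one_coe] at * <;> omega

theorem shiftAbove_shiftAbove {i j : ℕ+} (h : i < j) (e : ℕ+) :
    shiftAbove i (shiftAbove j e) = shiftAbove (j + 1) (shiftAbove i e) := by
  unfold shiftAbove
  split_ifs <;> simp only [← PNat.coe_lt_coe, ← PNat.coe_le_coe, ← PNat.coe_inj, PNat.add_coe,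
    PNat.one_coe] at * <;> omega

theorem shiftAbove_ne_add_one (s e : ℕ+) : shiftAbove s e ≠ s + 1 := by
  unfold shiftAbove
  split_ifs <;> simp only [ne_eq, ← PNat.coe_le_coe, ← PNat.coe_inj, PNat.add_coe,
    PNat.one_coe] at * <;> omega

theorem mem_range_shiftAbove {s e : ℕ+} (h : e ≠ s + 1) : e ∈ Set.range (shiftAbove s) := by
  rcases le_or_gt e s with hes | hse
  · exact ⟨e, shiftAbove_of_le hes⟩
  · obtain ⟨k, rfl⟩ := PNat.exists_eq_succ_of_ne_one (one_le.trans_lt hse).ne'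
    refine ⟨k, shiftAbove_of_lt ?_⟩
    simp only [ne_eq, ← PNat.coe_lt_coe, ← PNat.coe_inj, PNat.add_coe, PNat.one_coe] at *
    omega

def rightInsert (s : ℕ+) (M : Multiset ℕ+) : Multiset ℕ+ := s ::ₘ M.map (shiftAbove s)

theorem rightInsert_rightInsert {i j : ℕ+} (h : i < j) (M : Multiset ℕ+) :
    rightInsert i (rightInsert j M) = rightInsert (j + 1) (rightInsert i M) := by
  simp only [rightInsert, Multiset.map_cons, Multiset.map_map, Function.comp_def,
    shiftAbove_of_lt h, shiftAbove_of_le (h.trans (PNat.lt_add_right j 1)).le,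
    shiftAbove_shiftAbove h]
  exact Multiset.cons_swap _ _ _

theorem rightInsert_injective (s : ℕ+) : Function.Injective (rightInsert s) := fun _ _ h =>
  Multiset.map_injective (strictMono_shiftAbove s).injective ((Multiset.cons_inj_right s).1 h)

def rightAction : ForestMonoid →* (Function.End (Multiset ℕ+))ᵐᵒᵖ :=
  ForestCon.lift (FreeMonoid.lift fun k => .op (rightInsert k : Function.End _)) <|
    Con.conGen_le.2 <| by
    rintro _ _ ⟨i, j, h, rfl, rfl⟩
    apply MulOpposite.unop_injective
    funext M
    exact rightInsert_rightInsert h M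

def indexMultiset (x : ForestMonoid) : Multiset ℕ+ := (rightAction x).unop 0

theorem indexMultiset_mul_lam (x : ForestMonoid) (s : ℕ+) :
    indexMultiset (x * lam s) = rightInsert s (indexMultiset x) := by
  rw [indexMultiset, map_mul, MulOpposite.unop_mul]
  rfl

theorem indexMultiset_ofList {L : List ℕ+} (hL : L.Pairwise (· ≤ ·)) :
    indexMultiset (ofList L) = L := by
  induction L using List.reverseRecOn with
  | nil => rfl
  | append_singleton L s ih =>
    rw [List.pairwise_append] at hL
    have hL_le : ∀ e ∈ (L : Multiset ℕ+), shiftAbove s e = e := fun e he =>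
      shiftAbove_of_le (hL.2.2 e he s (List.mem_singleton_self s))
    rw [ofList_append, ofList_cons, ofList_nil, mul_one, indexMultiset_mul_lam, ih hL.1,
      rightInsert, Multiset.map_congr rfl hL_le, Multiset.map_id', Multiset.cons_coe,
      Multiset.coe_eq_coe]
    exact (List.perm_append_singleton s L).symm

theorem indexMultiset_injective : Function.Injective indexMultiset := by
  intro x y h
  rw [← ofList_normalForm x, ← ofList_normalForm y] at h ⊢
  rw [indexMultiset_ofList (pairwise_normalForm x), indexMultiset_ofList (pairwise_normalForm y),
    Multiset.coe_eq_coe] at h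
  rw [List.Perm.eq_of_pairwise' (pairwise_normalForm x) (pairwise_normalForm y) h]

theorem indexMultiset_surjective : Function.Surjective indexMultiset := fun M =>
  ⟨ofList (M.sort (· ≤ ·)), by rw [indexMultiset_ofList (Multiset.pairwise_sort M _),
    Multiset.sort_eq]⟩

theorem exists_shiftAbove_eq_of_mem_rightInsert {k e : ℕ+} {M : Multiset ℕ+}
    (he : e ∈ rightInsert k M) (hne : e ≠ k) : ∃ e' ∈ M, shiftAbove k e' = e :=
  Multiset.mem_map.1 ((Multiset.mem_cons.1 he).resolve_left hne)

theorem rightInsert_eq_rightInsert {s t : ℕ+} (hst : s < t) {A B : Multiset ℕ+}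
    (h : rightInsert s A = rightInsert t B) :
    ∃ a Z, t = a + 1 ∧ s < a ∧ A = rightInsert a Z ∧ B = rightInsert s Z := by
  obtain ⟨a, haA, hat⟩ :=
    exists_shiftAbove_eq_of_mem_rightInsert (by rw [h]; exact Multiset.mem_cons_self _ _) hst.ne'
  have hsa : s < a := by
    by_contra! has
    rw [shiftAbove_of_le has] at hat
    exact hst.not_ge (hat ▸ has)
  rw [shiftAbove_of_lt hsa] at hat
  subst hat
  obtain ⟨b, hbB, hbs⟩ :=
    exists_shiftAbove_eq_of_mem_rightInsert (by rw [← h]; exact Multiset.mem_cons_self _ _) hst.ne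
  have hsB : s ∈ B := by
    rcases le_or_gt b (a + 1) with hb | hb
    · rwa [← hbs, shiftAbove_of_le hb]
    · rw [shiftAbove_of_lt hb] at hbs
      exact absurd (hbs ▸ hb.trans (PNat.lt_add_right b 1)) hst.not_gt
  obtain ⟨A', rfl⟩ := Multiset.exists_cons_of_mem haA
  obtain ⟨B', rfl⟩ := Multiset.exists_cons_of_mem hsB
  have hA'B' : A'.map (shiftAbove s) = B'.map (shiftAbove (a + 1)) := by
    simpa only [rightInsert, Multiset.map_cons, shiftAbove_of_lt hsa, shiftAbove_of_le hst.le,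
      Multiset.cons_swap s, Multiset.cons_inj_right] using h
  -- `A'` avoids `a + 1` because the image of `shiftAbove (a + 1)` avoids `a + 2`.
  obtain ⟨Z, rfl⟩ : ∃ Z : Multiset ℕ+, Z.map (shiftAbove a) = A' := by
    refine Multiset.exists_map_eq_of_forall_mem_range fun e he => mem_range_shiftAbove ?_
    rintro rfl
    obtain ⟨b', -, hb'⟩ := Multiset.mem_map.1 (hA'B' ▸ Multiset.mem_map_of_mem (shiftAbove s) he)
    rw [shiftAbove_of_lt (hsa.trans (PNat.lt_add_right a 1))] at hb'
    exact shiftAbove_ne_add_one _ _ hb'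
  refine ⟨a, Z, rfl, hsa, rfl, ?_⟩
  rw [Multiset.map_map, Function.comp_def, funext (shiftAbove_shiftAbove hsa), ← Function.comp_def,
    ← Multiset.map_map] at hA'B'
  rw [rightInsert, Multiset.map_injective (strictMono_shiftAbove _).injective hA'B']

theorem mul_lam_eq_mul_lam {s t : ℕ+} (hst : s < t) {x y : ForestMonoid}
    (h : x * lam s = y * lam t) : ∃ a z, t = a + 1 ∧ s < a ∧ x = z * lam a ∧ y = z * lam s := by
  obtain ⟨a, Z, rfl, hsa, hx, hy⟩ := rightInsert_eq_rightInsert hst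
    (by rw [← indexMultiset_mul_lam, ← indexMultiset_mul_lam, h] :
      rightInsert s (indexMultiset x) = _)
  obtain ⟨z, rfl⟩ := indexMultiset_surjective Z
  refine ⟨a, z, rfl, hsa, indexMultiset_injective ?_, indexMultiset_injective ?_⟩ <;>
    rwa [indexMultiset_mul_lam]

theorem isRightRegular_lam (s : ℕ+) : IsRightRegular (lam s) := fun x y h =>
  indexMultiset_injective <| rightInsert_injective s <| by
    simp only [← indexMultiset_mul_lam]
    exact congrArg indexMultiset h

instance : IsRightCancelMul ForestMonoid where
  mul_right_cancel a := by
    induction a using Submonoid.induction_of_closure_eq_top_right closure_range_lam with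
    | one => exact isRegular_one.right
    | mul_right a _ hk ih =>
      obtain ⟨k, rfl⟩ := hk
      exact ih.mul (isRightRegular_lam k)

theorem isRightLCM_lam_lam {s t : ℕ+} (hst : s < t) :
    IsRightLCM (lam s) (lam t) (lam s * lam (t + 1)) := by
  refine ⟨⟨dvd_mul_right _ _, ⟨lam s, (lam_mul_lam hst).symm⟩⟩, ?_⟩
  rintro c' ⟨x, rfl⟩ ⟨y, hy⟩
  obtain ⟨z, rfl, -⟩ := lam_mul_eq_lam_mul hst hy
  exact ⟨z, (mul_assoc _ _ _).symm⟩

theorem exists_isRightLCM_lam (s t : ℕ+) :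
    ∃ u ∈ insert 1 (Set.range lam), IsRightLCM (lam s) (lam t) (lam s * u) := by
  rcases lt_trichotomy s t with hst | rfl | hts
  · exact ⟨lam (t + 1), Or.inr ⟨_, rfl⟩, isRightLCM_lam_lam hst⟩
  · exact ⟨1, Or.inl rfl, by rw [mul_one]; exact isRightLCM_self _⟩
  · refine ⟨lam t, Or.inr ⟨_, rfl⟩, ?_⟩
    rw [lam_mul_lam hts]
    exact (isRightLCM_lam_lam hts).symm

theorem exists_isRightLCM (a b : ForestMonoid) : ∃ c, IsRightLCM a b c := by
  refine exists_isRightLCM_of_closure_eq_top closure_range_lam ?_ <|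
    hasCommonRightMultiple_of_closure_eq_top closure_range_lam ?_ a b
  · rintro _ ⟨s, rfl⟩ _ ⟨t, rfl⟩ -
    exact exists_isRightLCM_lam s t
  · rintro _ ⟨s, rfl⟩ _ ⟨t, rfl⟩
    obtain ⟨u, hu, hlcm⟩ := exists_isRightLCM_lam t s
    exact ⟨u, hu, hlcm.1.2⟩

theorem isRightLCM_op_lam {s a : ℕ+} (hsa : s < a) :
    IsRightLCM (op (lam s)) (op (lam (a + 1))) (op (lam s) * op (lam a)) := by
  refine ⟨⟨dvd_mul_right _ _, ⟨op (lam s), by rw [← op_mul, ← op_mul, lam_mul_lam hsa]⟩⟩, ?_⟩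
  rintro c' ⟨x, rfl⟩ ⟨y, hy⟩
  obtain ⟨a', z, ha, -, hx, -⟩ :=
    mul_lam_eq_mul_lam (hsa.trans (PNat.lt_add_right a 1)) (by simpa using congrArg unop hy)
  obtain rfl := add_right_cancel ha.symm
  exact ⟨op z, by rw [← op_unop x, hx]; simp [mul_assoc]⟩

theorem exists_eq_add_one_of_op_lam {s t : ℕ+} (hst : s < t)
    (h : HasCommonRightMultiple (op (lam s)) (op (lam t))) : ∃ a, t = a + 1 ∧ s < a := by
  obtain ⟨c, ⟨x, rfl⟩, ⟨y, hy⟩⟩ := h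
  obtain ⟨a, -, ht, hsa, -⟩ := mul_lam_eq_mul_lam hst (by simpa using congrArg unop hy)
  exact ⟨a, ht, hsa⟩

theorem exists_isRightLCM_op_lam {s t : ℕ+}
    (h : HasCommonRightMultiple (op (lam s)) (op (lam t))) :
    ∃ u ∈ insert 1 (unop ⁻¹' Set.range lam),
      IsRightLCM (op (lam s)) (op (lam t)) (op (lam s) * u) := by
  rcases lt_trichotomy s t with hst | rfl | hts
  · obtain ⟨a, rfl, hsa⟩ := exists_eq_add_one_of_op_lam hst h
    exact ⟨op (lam a), Or.inr ⟨a, rfl⟩, isRightLCM_op_lam hsa⟩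
  · exact ⟨1, Or.inl rfl, by rw [mul_one]; exact isRightLCM_self _⟩
  · obtain ⟨a, rfl, hta⟩ := exists_eq_add_one_of_op_lam hts (h.imp fun _ => And.symm)
    refine ⟨op (lam t), Or.inr ⟨t, rfl⟩, ?_⟩
    rw [← op_mul, ← lam_mul_lam hta, op_mul]
    exact (isRightLCM_op_lam hta).symm

theorem exists_isRightLCM_op {a b : ForestMonoidᵐᵒᵖ} (h : HasCommonRightMultiple a b) :
    ∃ c, IsRightLCM a b c := by
  refine exists_isRightLCM_of_closure_eq_top (S := unop ⁻¹' Set.range lam) ?_ ?_ h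
  · rw [← Submonoid.op_closure, closure_range_lam, Submonoid.op_top]
  · rintro x ⟨s, hs⟩ y ⟨t, ht⟩
    obtain rfl : op (lam s) = x := by rw [hs, op_unop]
    obtain rfl : op (lam t) = y := by rw [ht, op_unop]
    exact exists_isRightLCM_op_lam

def length : ForestMonoid →* Multiplicative ℕ :=
  ForestCon.lift (FreeMonoid.lift fun _ => .ofAdd 1) <| Con.conGen_le.2 <| by
    rintro _ _ ⟨i, j, -, rfl, rfl⟩
    rfl

theorem length_lam (k : ℕ+) : length (lam k) = .ofAdd 1 :=
  FreeMonoid.lift_eval_of _ _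

theorem eq_one_of_length_eq_one {x : ForestMonoid} (h : length x = 1) : x = 1 := by
  induction x using Submonoid.induction_of_closure_eq_top_left closure_range_lam with
  | one => rfl
  | mul_left _ hk x ih =>
    obtain ⟨k, rfl⟩ := hk
    rw [map_mul, length_lam, ← toAdd_eq_zero, toAdd_mul, toAdd_ofAdd] at h
    omega

theorem exists_isLeftGCD (a b : ForestMonoid) : ∃ d, IsLeftGCD a b d :=
  exists_isLeftGCD_of_exists_isRightLCM (fun x => (length x).toAdd)
    (fun x y => by rw [map_mul, toAdd_mul]) (fun _ h => eq_one_of_length_eq_one (toAdd_eq_zero.1 h))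
    (fun x y _ => exists_isRightLCM x y) a b

theorem exists_isLeftGCD_op (a b : ForestMonoidᵐᵒᵖ) : ∃ d, IsLeftGCD a b d :=
  exists_isLeftGCD_of_exists_isRightLCM (fun x => (length x.unop).toAdd)
    (fun x y => by rw [unop_mul, map_mul, toAdd_mul, add_comm])
    (fun _ h => unop_injective (eq_one_of_length_eq_one (toAdd_eq_zero.1 h)))
    (fun _ _ => exists_isRightLCM_op) a b

end ForestMonoid

open ForestMonoid Monoid MulOpposite in
/-- the forest monoid has common right multiples, least common right
multiples, greatest common left factors, greatest common right factors, and conditional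
least common left multiples. -/
theorem forestMonoid_multiples_and_factors :
    (∀ a b : ForestMonoid, ∃ x y : ForestMonoid, a * x = b * y) ∧
    (∀ a b : ForestMonoid, ∃ c : ForestMonoid,
      ((∃ x, a * x = c) ∧ (∃ y, b * y = c)) ∧
      ∀ c' : ForestMonoid, (∃ x, a * x = c') → (∃ y, b * y = c') →
        ∃ z, c * z = c') ∧
    (∀ a b : ForestMonoid, ∃ d : ForestMonoid,
      ((∃ x, d * x = a) ∧ (∃ y, d * y = b)) ∧
      ∀ d' : ForestMonoid, (∃ x, d' * x = a) → (∃ y, d' * y = b) →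
        ∃ z, d' * z = d) ∧
    (∀ a b : ForestMonoid, ∃ f : ForestMonoid,
      ((∃ x, x * f = a) ∧ (∃ y, y * f = b)) ∧
      ∀ f' : ForestMonoid, (∃ x, x * f' = a) → (∃ y, y * f' = b) →
        ∃ z, z * f' = f) ∧
    (∀ a b : ForestMonoid, (∃ c' : ForestMonoid, (∃ x, x * a = c') ∧ (∃ y, y * b = c')) →
      ∃ c : ForestMonoid, ((∃ x, x * a = c) ∧ (∃ y, y * b = c)) ∧
        ∀ c' : ForestMonoid, (∃ x, x * a = c') → (∃ y, y * b = c') →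
          ∃ z, z * c = c') := by
  have dvd_iff {a b : ForestMonoid} : (∃ x, a * x = b) ↔ a ∣ b := exists_congr fun _ => eq_comm
  have op_dvd_iff {a b : ForestMonoid} : (∃ x, x * a = b) ↔ op a ∣ op b :=
    (exists_congr fun _ => eq_comm).trans rightDvd_iff_op_dvd_op
  simp only [dvd_iff, op_dvd_iff]
  refine ⟨fun a b => ?_, exists_isRightLCM, exists_isLeftGCD, fun a b => ?_, fun a b hab => ?_⟩
  · obtain ⟨c, ⟨⟨x, hx⟩, ⟨y, hy⟩⟩, -⟩ := exists_isRightLCM a b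
    exact ⟨x, y, hx ▸ hy⟩
  · obtain ⟨f, hf, hmax⟩ := exists_isLeftGCD_op (op a) (op b)
    exact ⟨f.unop, hf, fun f' => hmax (op f')⟩
  · obtain ⟨c', hc'⟩ := hab
    obtain ⟨c, hc, hmin⟩ := exists_isRightLCM_op ⟨op c', hc'⟩
    exact ⟨c.unop, hc, fun c' => hmin (op c')⟩
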